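/- Let G ⊆ ℂ² be a balanced open set with T ⊆ G. Then (G,T) is norm preserving if and only if G ⊆ Δ = {λ ∈ ℂ² : |λ₁| + |λ₂| < 1}. -/

import Mathlib

open Metric

noncomputable section

/-- The open unit disc in `ℂ`. -/
def uD : Set ℂ := Metric.ball (0 : ℂ) 1

/-- The union of the two crossed discs `(𝔻 × {0}) ∪ ({0} × 𝔻)` in `ℂ²`. -/
def TT : Set (ℂ × ℂ) := {p | (p.1 ∈ uD ∧ p.2 = 0) ∨ (p.1 = 0 ∧ p.2 ∈ uD)}

/-- A function is holomorphic on `T` if near every point of `T` it extends to a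
holomorphic function on an open neighbourhood. -/
def HoloOnT (f : ℂ × ℂ → ℂ) : Prop :=
  ∀ p ∈ TT, ∃ U : Set (ℂ × ℂ), IsOpen U ∧ p ∈ U ∧
    ∃ F : ℂ × ℂ → ℂ, DifferentiableOn ℂ F U ∧ ∀ q ∈ U ∩ TT, F q = f q

/-- Boundedness on `T`. -/
def BddOnT (f : ℂ × ℂ → ℂ) : Prop := ∃ C : ℝ, ∀ p ∈ TT, ‖f p‖ ≤ C

/-- The supremum of `‖f‖` over a subset of `ℂ²`. -/
def supOn (f : ℂ × ℂ → ℂ) (S : Set (ℂ × ℂ)) : ℝ := sSup ((fun p => ‖f p‖) '' S)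

/-- The pair `(G, T)` is norm preserving: every bounded holomorphic function on `T`
has a holomorphic extension to `G` with the same supremum norm. -/
def NormPres (G : Set (ℂ × ℂ)) : Prop :=
  ∀ f : ℂ × ℂ → ℂ, HoloOnT f → BddOnT f →
    ∃ F : ℂ × ℂ → ℂ, DifferentiableOn ℂ F G ∧ (∀ p ∈ TT, F p = f p) ∧
      supOn F G = supOn f TT


/-- The domain `Δ = {λ ∈ ℂ² : |λ₁| + |λ₂| < 1}`. -/
def Delta : Set (ℂ × ℂ) := {p | ‖p.1‖ + ‖p.2‖ < 1}

/-! If `G ⊆ Δ`, let `M = sup_T |f|` and `c = f(0,0)`; when `|c| = M` the function `f` is constant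
on `T` by the maximum principle. Otherwise compose the slices `f(·,0)`, `f(0,·)` with the Möbius
automorphism of the disc of radius `M` sending `c` to `0`, obtaining `g, h` vanishing at `0`. With
`ĝ, ĥ` their difference quotients at `0`, the function `λ₁ ĝ(λ₁+λ₂) + λ₂ ĥ(λ₁+λ₂)` restricts to
`g, h` on `T` and, by Schwarz's lemma, is bounded by `(|λ₁|+|λ₂|) M ≤ M` on `Δ`; composing with the
inverse automorphism gives a norm preserving extension.

Conversely, for `λ ∈ G` choose unimodular `α, β` with `αλ₁ = |λ₁|`, `βλ₂ = |λ₂|`. A norm preserving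
extension `F` of `αz + βw` is bounded by `1` on `G`, so Schwarz's lemma for `ζ ↦ F(ζλ)` (defined on
the disc since `G` is balanced) bounds its derivative `|λ₁| + |λ₂|` at `0` by `1`. As `G` is open,
the inequality is strict. -/

open ComplexConjugate

def discMobius (R : ℝ) (a w : ℂ) : ℂ := R ^ 2 * (w - a) / (R ^ 2 - conj a * w)

lemma sq_norm_sub_conj_mul_sub (R : ℝ) (a w : ℂ) :
    ‖(R : ℂ) ^ 2 - conj a * w‖ ^ 2 - R ^ 2 * ‖w - a‖ ^ 2
      = (R ^ 2 - ‖a‖ ^ 2) * (R ^ 2 - ‖w‖ ^ 2) := by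
  simp only [Complex.sq_norm, Complex.normSq_apply, Complex.sub_re, Complex.sub_im,
    Complex.mul_re, Complex.mul_im, Complex.conj_re, Complex.conj_im, ← Complex.ofReal_pow,
    Complex.ofReal_re, Complex.ofReal_im]
  ring

lemma discMobius_self (R : ℝ) (a : ℂ) : discMobius R a a = 0 := by
  simp [discMobius]

section discMobius

variable {R : ℝ} {a w : ℂ}

lemma discMobius_denom_ne_zero (ha : ‖a‖ < R) (hw : ‖w‖ ≤ R) : (R : ℂ) ^ 2 - conj a * w ≠ 0 := by
  intro h
  have hR : 0 < R := (norm_nonneg a).trans_lt ha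
  have : R ^ 2 ≤ ‖a‖ * R := by
    calc R ^ 2 = ‖(R : ℂ) ^ 2‖ := by simp
      _ = ‖conj a * w‖ := by rw [sub_eq_zero.mp h]
      _ ≤ ‖a‖ * R := by rw [norm_mul, Complex.norm_conj]; gcongr
  nlinarith

lemma norm_discMobius_le (ha : ‖a‖ < R) (hw : ‖w‖ ≤ R) : ‖discMobius R a w‖ ≤ R := by
  have hR : 0 < R := (norm_nonneg a).trans_lt ha
  have hden := norm_pos_iff.mpr (discMobius_denom_ne_zero ha hw)
  have key : R * ‖w - a‖ ≤ ‖(R : ℂ) ^ 2 - conj a * w‖ := by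
    rw [← pow_le_pow_iff_left₀ (by positivity) (norm_nonneg _) two_ne_zero]
    have := sq_norm_sub_conj_mul_sub R a w
    have : 0 ≤ (R ^ 2 - ‖a‖ ^ 2) * (R ^ 2 - ‖w‖ ^ 2) := by
      apply mul_nonneg <;> nlinarith [norm_nonneg a, norm_nonneg w]
    nlinarith
  rw [discMobius, norm_div, div_le_iff₀ hden, norm_mul]
  simpa [pow_two, hR.le, mul_assoc] using mul_le_mul_of_nonneg_left key hR.le

lemma discMobius_neg_discMobius (ha : ‖a‖ < R) (hw : ‖w‖ ≤ R) :
    discMobius R (-a) (discMobius R a w) = w := by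
  have hden := discMobius_denom_ne_zero ha hw
  have haR : (R : ℂ) ^ 2 - conj a * a ≠ 0 := discMobius_denom_ne_zero ha ha.le
  have hR : (R : ℂ) ≠ 0 := Complex.ofReal_ne_zero.mpr ((norm_nonneg a).trans_lt ha).ne'
  have hden' : (R : ℂ) ^ 2 - w * conj a ≠ 0 := by rwa [mul_comm]
  simp only [discMobius, map_neg]
  field_simp
  rw [show (R : ℂ) ^ 2 - w * conj a - -((w - a) * conj a) = R ^ 2 - conj a * a by ring,
    div_eq_iff haR]
  ring

lemma DifferentiableOn.discMobius {E : Type*} [NormedAddCommGroup E] [NormedSpace ℂ E]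
    {g : E → ℂ} {U : Set E} (hg : DifferentiableOn ℂ g U) (ha : ‖a‖ < R)
    (hgR : ∀ x ∈ U, ‖g x‖ ≤ R) : DifferentiableOn ℂ (fun x => discMobius R a (g x)) U := by
  simp only [_root_.discMobius, div_eq_mul_inv]
  exact ((hg.sub_const a).const_mul _).mul (((hg.const_mul _).const_sub _).inv
    fun x hx => discMobius_denom_ne_zero ha (hgR x hx))

end discMobius

lemma IsOpen.lt_one_of_le_one {E : Type*} [AddCommGroup E] [Module ℝ E] [TopologicalSpace E]
    [ContinuousSMul ℝ E] {U : Set E} (hU : IsOpen U) {N : E → ℝ}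
    (hN : ∀ t : ℝ, 0 ≤ t → ∀ x, N (t • x) = t * N x) (hle : ∀ x ∈ U, N x ≤ 1) {x : E}
    (hx : x ∈ U) : N x < 1 := by
  have hU1 : ∀ᶠ t : ℝ in nhds 1, t • x ∈ U :=
    (hU.preimage (continuous_id.smul continuous_const)).mem_nhds (by simpa using hx)
  obtain ⟨t, ht1, htU⟩ := hU1.exists_gt
  by_contra! hNx
  have := hle _ htU
  rw [hN t (by linarith)] at this
  nlinarith

section supOn

variable {f F : ℂ × ℂ → ℂ} {S U : Set (ℂ × ℂ)} {C : ℝ} {p : ℂ × ℂ}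

lemma norm_le_supOn (hf : ∀ q ∈ S, ‖f q‖ ≤ C) (hp : p ∈ S) : ‖f p‖ ≤ supOn f S :=
  le_csSup ⟨C, by rintro _ ⟨q, hq, rfl⟩; exact hf q hq⟩ ⟨p, hp, rfl⟩

lemma supOn_le (hS : S.Nonempty) (hf : ∀ q ∈ S, ‖f q‖ ≤ C) : supOn f S ≤ C :=
  csSup_le (hS.image _) (by rintro _ ⟨q, hq, rfl⟩; exact hf q hq)

lemma norm_le_supOn_of_pos (h : 0 < supOn f S) (hp : p ∈ S) : ‖f p‖ ≤ supOn f S := by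
  have hbdd : BddAbove ((fun q => ‖f q‖) '' S) := by
    by_contra hb
    rw [supOn, Real.sSup_of_not_bddAbove hb] at h
    exact h.false
  exact le_csSup hbdd ⟨p, hp, rfl⟩

lemma supOn_eq_of_eqOn (hSU : S ⊆ U) (hS : S.Nonempty) (hFf : ∀ q ∈ S, F q = f q)
    (hF : ∀ q ∈ U, ‖F q‖ ≤ supOn f S) : supOn F U = supOn f S := by
  refine le_antisymm (supOn_le (hS.mono hSU) hF) (supOn_le hS fun q hq => ?_)
  rw [← hFf q hq]
  exact norm_le_supOn hF (hSU hq)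

end supOn

lemma mem_uD {z : ℂ} : z ∈ uD ↔ ‖z‖ < 1 := mem_ball_zero_iff

lemma forall_mem_TT {P : ℂ × ℂ → Prop} :
    (∀ p ∈ TT, P p) ↔ (∀ z ∈ uD, P (z, 0)) ∧ ∀ w ∈ uD, P (0, w) := by
  refine ⟨fun h => ⟨fun z hz => h _ (Or.inl ⟨hz, rfl⟩), fun w hw => h _ (Or.inr ⟨rfl, hw⟩)⟩, ?_⟩
  rintro ⟨h₁, h₂⟩ ⟨z, w⟩ (⟨hz, rfl : w = 0⟩ | ⟨rfl : z = 0, hw⟩)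
  exacts [h₁ z hz, h₂ w hw]

lemma zero_mem_TT : (0 : ℂ × ℂ) ∈ TT := Or.inl ⟨mem_ball_self one_pos, rfl⟩

lemma HoloOnT.differentiableOn_comp {f : ℂ × ℂ → ℂ} (hf : HoloOnT f) {e : ℂ → ℂ × ℂ}
    (he : Differentiable ℂ e) (heT : ∀ z ∈ uD, e z ∈ TT) :
    DifferentiableOn ℂ (f ∘ e) uD := by
  intro z hz
  obtain ⟨U, hUo, hzU, F, hF, hFf⟩ := hf (e z) (heT z hz)
  have hFe : DifferentiableAt ℂ (F ∘ e) z :=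
    (hF.differentiableAt (hUo.mem_nhds hzU)).comp z (he z)
  refine (hFe.congr_of_eventuallyEq ?_).differentiableWithinAt
  filter_upwards [he.continuous.continuousAt.preimage_mem_nhds (hUo.mem_nhds hzU),
    isOpen_ball.mem_nhds hz] with y hyU hy
  exact (hFf (e y) ⟨hyU, heT y hy⟩).symm

lemma norm_dslope_zero_le {g : ℂ → ℂ} {R : ℝ} (hg : DifferentiableOn ℂ g uD) (hg0 : g 0 = 0)
    (hgR : ∀ z ∈ uD, ‖g z‖ ≤ R) {z : ℂ} (hz : z ∈ uD) : ‖dslope g 0 z‖ ≤ R := by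
  have hmaps : Set.MapsTo g (ball 0 1) (closedBall (g 0) R) := fun y hy => by
    rw [hg0, mem_closedBall_zero_iff]; exact hgR y hy
  simpa using Complex.norm_dslope_le_div_of_mapsTo_ball hg hmaps hz

def crossExtension (g h : ℂ → ℂ) (p : ℂ × ℂ) : ℂ :=
  p.1 * dslope g 0 (p.1 + p.2) + p.2 * dslope h 0 (p.1 + p.2)

section crossExtension

variable {g h : ℂ → ℂ}

lemma crossExtension_left (hg0 : g 0 = 0) (z : ℂ) : crossExtension g h (z, 0) = g z := by
  simpa [crossExtension] using sub_smul_dslope_of_zero hg0 z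

lemma crossExtension_right (hh0 : h 0 = 0) (w : ℂ) : crossExtension g h (0, w) = h w := by
  simpa [crossExtension] using sub_smul_dslope_of_zero hh0 w

lemma add_mem_uD_of_mem_Delta {p : ℂ × ℂ} (hp : p ∈ Delta) : p.1 + p.2 ∈ uD :=
  mem_uD.mpr ((norm_add_le _ _).trans_lt hp)

lemma differentiableOn_crossExtension (hg : DifferentiableOn ℂ g uD)
    (hh : DifferentiableOn ℂ h uD) : DifferentiableOn ℂ (crossExtension g h) Delta := by
  have h0 : uD ∈ nhds (0 : ℂ) := isOpen_ball.mem_nhds (mem_ball_self one_pos)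
  have hsum : DifferentiableOn ℂ (fun p : ℂ × ℂ => p.1 + p.2) Delta :=
    (differentiable_fst.add differentiable_snd).differentiableOn
  have hg' := ((Complex.differentiableOn_dslope h0).mpr hg).comp hsum
    fun _ => add_mem_uD_of_mem_Delta
  have hh' := ((Complex.differentiableOn_dslope h0).mpr hh).comp hsum
    fun _ => add_mem_uD_of_mem_Delta
  exact (differentiable_fst.differentiableOn.mul hg').add
    (differentiable_snd.differentiableOn.mul hh')

lemma norm_crossExtension_le {R : ℝ} (hg : DifferentiableOn ℂ g uD) (hg0 : g 0 = 0)
    (hgR : ∀ z ∈ uD, ‖g z‖ ≤ R) (hh : DifferentiableOn ℂ h uD) (hh0 : h 0 = 0)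
    (hhR : ∀ w ∈ uD, ‖h w‖ ≤ R) {p : ℂ × ℂ} (hp : p ∈ Delta) :
    ‖crossExtension g h p‖ ≤ R := by
  have hR : 0 ≤ R := (norm_nonneg (g 0)).trans (hgR 0 (mem_ball_self one_pos))
  have hs := add_mem_uD_of_mem_Delta hp
  calc ‖crossExtension g h p‖
      ≤ ‖p.1‖ * ‖dslope g 0 (p.1 + p.2)‖ + ‖p.2‖ * ‖dslope h 0 (p.1 + p.2)‖ := by
        rw [crossExtension, ← norm_mul, ← norm_mul]
        exact norm_add_le _ _
    _ ≤ ‖p.1‖ * R + ‖p.2‖ * R := by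
        gcongr
        exacts [norm_dslope_zero_le hg hg0 hgR hs, norm_dslope_zero_le hh hh0 hhR hs]
    _ = (‖p.1‖ + ‖p.2‖) * R := by ring
    _ ≤ R := mul_le_of_le_one_left hR (le_of_lt hp)

end crossExtension

lemma HoloOnT.eq_apply_zero_of_norm_le {f : ℂ × ℂ → ℂ} (hf : HoloOnT f)
    (hmax : ∀ p ∈ TT, ‖f p‖ ≤ ‖f 0‖) : ∀ p ∈ TT, f p = f 0 := by
  have slice : ∀ e : ℂ → ℂ × ℂ, Differentiable ℂ e → e 0 = 0 → (∀ z ∈ uD, e z ∈ TT) →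
      ∀ z ∈ uD, f (e z) = f 0 := by
    intro e he he0 heT z hz
    have hmax' : IsMaxOn (norm ∘ f ∘ e) uD 0 := fun y hy => by
      simpa [he0] using hmax _ (heT y hy)
    simpa [he0] using Complex.eqOn_of_isPreconnected_of_isMaxOn_norm
      (convex_ball 0 1).isPreconnected isOpen_ball (hf.differentiableOn_comp he heT)
      (mem_ball_self one_pos) hmax' hz
  exact forall_mem_TT.mpr
    ⟨slice _ (differentiable_id.prodMk (differentiable_const 0)) rfl fun z hz => Or.inl ⟨hz, rfl⟩,
      slice _ ((differentiable_const 0).prodMk differentiable_id) rfl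
        fun w hw => Or.inr ⟨rfl, hw⟩⟩

lemma HoloOnT.exists_extension_Delta {f : ℂ × ℂ → ℂ} (hf : HoloOnT f) {M : ℝ}
    (hfM : ∀ p ∈ TT, ‖f p‖ ≤ M) (hc : ‖f 0‖ < M) :
    ∃ F : ℂ × ℂ → ℂ, DifferentiableOn ℂ F Delta ∧ (∀ p ∈ TT, F p = f p) ∧
      ∀ p ∈ Delta, ‖F p‖ ≤ M := by
  obtain ⟨hfM₁, hfM₂⟩ := forall_mem_TT.mp hfM
  set g : ℂ → ℂ := fun z => discMobius M (f 0) (f (z, 0))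
  set h : ℂ → ℂ := fun w => discMobius M (f 0) (f (0, w))
  have hg : DifferentiableOn ℂ g uD :=
    (hf.differentiableOn_comp (differentiable_id.prodMk (differentiable_const 0))
      fun z hz => Or.inl ⟨hz, rfl⟩).discMobius hc hfM₁
  have hh : DifferentiableOn ℂ h uD :=
    (hf.differentiableOn_comp ((differentiable_const 0).prodMk differentiable_id)
      fun w hw => Or.inr ⟨rfl, hw⟩).discMobius hc hfM₂
  have hg0 : g 0 = 0 := discMobius_self M (f 0)
  have hh0 : h 0 = 0 := discMobius_self M (f 0)
  have hgM : ∀ z ∈ uD, ‖g z‖ ≤ M := fun z hz => norm_discMobius_le hc (hfM₁ z hz)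
  have hhM : ∀ w ∈ uD, ‖h w‖ ≤ M := fun w hw => norm_discMobius_le hc (hfM₂ w hw)
  have hc' : ‖-f 0‖ < M := by rwa [norm_neg]
  have hIM := fun p (hp : p ∈ Delta) => norm_crossExtension_le hg hg0 hgM hh hh0 hhM hp
  refine ⟨fun p => discMobius M (-f 0) (crossExtension g h p),
    (differentiableOn_crossExtension hg hh).discMobius hc' hIM,
    forall_mem_TT.mpr ⟨fun z hz => ?_, fun w hw => ?_⟩,
    fun p hp => norm_discMobius_le hc' (hIM p hp)⟩
  · beta_reduce
    rw [crossExtension_left hg0]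
    exact discMobius_neg_discMobius hc (hfM₁ z hz)
  · beta_reduce
    rw [crossExtension_right hh0]
    exact discMobius_neg_discMobius hc (hfM₂ w hw)

lemma normPres_of_subset_Delta {G : Set (ℂ × ℂ)} (hTG : TT ⊆ G) (hGD : G ⊆ Delta) :
    NormPres G := by
  intro f hf ⟨C, hC⟩
  have hfM : ∀ p ∈ TT, ‖f p‖ ≤ supOn f TT := fun p hp => norm_le_supOn hC hp
  suffices ∃ F : ℂ × ℂ → ℂ, DifferentiableOn ℂ F Delta ∧ (∀ p ∈ TT, F p = f p) ∧
      ∀ p ∈ Delta, ‖F p‖ ≤ supOn f TT by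
    obtain ⟨F, hFd, hFf, hFM⟩ := this
    exact ⟨F, hFd.mono hGD, hFf,
      supOn_eq_of_eqOn hTG ⟨0, zero_mem_TT⟩ hFf fun p hp => hFM p (hGD hp)⟩
  rcases (hfM 0 zero_mem_TT).eq_or_lt with hc | hc
  · exact ⟨fun _ => f 0, differentiableOn_const _,
      fun p hp => (hf.eq_apply_zero_of_norm_le fun q hq => hc ▸ hfM q hq) p hp |>.symm,
      fun _ _ => hc.le⟩
  · exact hf.exists_extension_Delta hfM hc

lemma fderiv_eq_of_eqOn_TT {F : ℂ × ℂ → ℂ} (hF : DifferentiableAt ℂ F 0)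
    {ℓ : ℂ × ℂ →L[ℂ] ℂ} (hFℓ : ∀ p ∈ TT, F p = ℓ p) : fderiv ℂ F 0 = ℓ := by
  have slice : ∀ e : ℂ →L[ℂ] ℂ × ℂ, (∀ z ∈ uD, e z ∈ TT) →
      (fderiv ℂ F 0).comp e = ℓ.comp e := by
    intro e heT
    have h₁ : HasFDerivAt (F ∘ e) ((fderiv ℂ F 0).comp e) 0 :=
      (by simpa using hF.hasFDerivAt : HasFDerivAt F (fderiv ℂ F 0) (e 0)).comp 0 e.hasFDerivAt
    have h₂ : HasFDerivAt (F ∘ e) (ℓ.comp e) 0 := by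
      refine (ℓ.comp e).hasFDerivAt.congr_of_eventuallyEq ?_
      filter_upwards [isOpen_ball.mem_nhds (mem_ball_self one_pos)] with z hz
      exact hFℓ (e z) (heT z hz)
    exact h₁.unique h₂
  exact ContinuousLinearMap.prod_ext (slice _ fun z hz => Or.inl ⟨hz, rfl⟩)
    (slice _ fun w hw => Or.inr ⟨rfl, hw⟩)

lemma norm_add_norm_le_one_of_normPres {G : Set (ℂ × ℂ)} (hG : IsOpen G) (hbal : Balanced ℂ G)
    (hNP : NormPres G) {x : ℂ × ℂ} (hx : x ∈ G) : ‖x.1‖ + ‖x.2‖ ≤ 1 := by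
  obtain ⟨α, hα, hαx⟩ := Complex.exists_norm_eq_mul_self x.1
  obtain ⟨β, hβ, hβx⟩ := Complex.exists_norm_eq_mul_self x.2
  set ℓ : ℂ × ℂ →L[ℂ] ℂ := α • ContinuousLinearMap.fst ℂ ℂ ℂ + β • ContinuousLinearMap.snd ℂ ℂ ℂ
  have hℓ : ∀ p, ℓ p = α * p.1 + β * p.2 := fun p => rfl
  have hℓT : ∀ p ∈ TT, ‖ℓ p‖ ≤ 1 := forall_mem_TT.mpr
    ⟨fun z hz => by simpa [hℓ, hα] using (mem_uD.mp hz).le,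
      fun w hw => by simpa [hℓ, hβ] using (mem_uD.mp hw).le⟩
  obtain ⟨F, hFd, hFℓ, hsup⟩ := hNP ℓ
    (fun _ _ => ⟨Set.univ, isOpen_univ, trivial, ℓ, ℓ.differentiable.differentiableOn,
      fun _ _ => rfl⟩)
    ⟨1, hℓT⟩
  have hsup_pos : 0 < supOn F G := by
    have h_half : ((1 / 2 : ℂ), (0 : ℂ)) ∈ TT := Or.inl ⟨mem_uD.mpr (by norm_num), rfl⟩
    have := norm_le_supOn hℓT h_half
    simp only [hℓ, mul_zero, add_zero, norm_mul, hα, one_mul] at this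
    rw [hsup]
    exact lt_of_lt_of_le (by norm_num) this
  have hF1 : ∀ p ∈ G, ‖F p‖ ≤ 1 := fun p hp =>
    (norm_le_supOn_of_pos hsup_pos hp).trans (hsup ▸ supOn_le ⟨0, zero_mem_TT⟩ hℓT)
  have hxG : ∀ ζ ∈ uD, ζ • x ∈ G := fun ζ hζ => hbal.smul_mem (mem_uD.mp hζ).le hx
  have hFx : ∀ ζ ∈ uD, DifferentiableAt ℂ F (ζ • x) := fun ζ hζ =>
    hFd.differentiableAt (hG.mem_nhds (hxG ζ hζ))
  have hφd : DifferentiableOn ℂ (fun ζ : ℂ => F (ζ • x)) uD := fun ζ hζ =>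
    ((hFx ζ hζ).comp ζ ((differentiable_id.smul_const x) ζ)).differentiableWithinAt
  have h0 : (0 : ℂ) ∈ uD := mem_ball_self one_pos
  have hφ' : HasDerivAt (fun ζ : ℂ => F (ζ • x)) (ℓ x) 0 := by
    have hF0 : fderiv ℂ F 0 = ℓ :=
      fderiv_eq_of_eqOn_TT (by simpa using hFx 0 h0) hFℓ
    have := (hFx 0 h0).hasFDerivAt.comp_hasDerivAt (0 : ℂ) ((hasDerivAt_id (0 : ℂ)).smul_const x)
    simpa [hF0, Function.comp_def] using this
  have hschwarz := norm_dslope_zero_le hφd (by simpa using hFℓ 0 zero_mem_TT)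
    (fun ζ hζ => hF1 _ (hxG ζ hζ)) h0
  rw [dslope_same, hφ'.deriv, hℓ, ← hαx, ← hβx] at hschwarz
  rwa [← Complex.ofReal_add, Complex.norm_real, Real.norm_of_nonneg (by positivity)] at hschwarz

theorem stmt_3 (G : Set (ℂ × ℂ)) (hG : IsOpen G) (hbal : Balanced ℂ G) (hTG : TT ⊆ G) :
    NormPres G ↔ G ⊆ Delta := by
  refine ⟨fun hNP x hx => ?_, normPres_of_subset_Delta hTG⟩
  refine hG.lt_one_of_le_one (N := fun p => ‖p.1‖ + ‖p.2‖) (fun t ht p => ?_)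
    (fun p hp => norm_add_norm_le_one_of_normPres hG hbal hNP hp) hx
  simp only [Prod.smul_fst, Prod.smul_snd, norm_smul, Real.norm_of_nonneg ht, mul_add]
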